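/- arXiv:1510.04335 — 2 statements merged into one kernel-verified Lean document; each statement's English description precedes it below -/
import Mathlib

section
/- Fix t_0 < T < ∞, assume W(t_0,T) is invertible, and suppose the initial states satisfy A x_i(t_0) = 0 for every i = 1,…,N. Then under the optimal open-loop control u*(t) = −(L(a) ⊗ (B^T e^{A^T(T−t)} C^T W(t_0,T)^{-1} C e^{A(T−t_0)})) x_0, the trajectories x_i(t) = e^{A(t−t_0)} x_i(t_0) + ∫_{t_0}^t e^{A(t−s)} B u_i^*(s) ds satisfy, for every i, C x_i(T) = (Σ_{k=1}^N a_k)^{-1} Σ_{j=1}^N a_j C x_j(t_0); that is, the common consensus output at time T is the a-weighted average of the initial outputs. -/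
/-!
Write the optimal control of agent `i` as `u*ᵢ(s) = -K(s) wᵢ` with `wᵢ = ∑ⱼ L(a)ᵢⱼ xⱼ(t₀)` and
`K(s) = Bᵀ e^{Aᵀ(T−s)} Cᵀ W⁻¹ C e^{A(T−t₀)}`. The Gramian appears in
`C ∫ e^{A(T−s)} B K(s) ds = W W⁻¹ C e^{A(T−t₀)}`, so with `yⱼ = C e^{A(T−t₀)} xⱼ(t₀)` we get
`C xᵢ(T) = yᵢ - ∑ⱼ L(a)ᵢⱼ yⱼ`, which by the shape of `L(a)` is the `a`-weighted average of the
`yⱼ`. Finally `A xⱼ(t₀) = 0` makes the exponential fix `xⱼ(t₀)`, so `yⱼ = C xⱼ(t₀)`.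
-/

open Matrix MeasureTheory

attribute [local instance] Matrix.normedAddCommGroup Matrix.normedSpace

/-- `Lmat a = I_N - (∑ i, a i)⁻¹ • 1_N aᵀ`. -/
noncomputable def Lmat {N : ℕ} (a : Fin N → ℝ) : Matrix (Fin N) (Fin N) ℝ :=
  1 - (∑ i, a i)⁻¹ • Matrix.vecMulVec (fun _ => 1) a

/-- The output controllability Gramian
`W(t,T) = ∫_t^T C e^{A(T−s)} B Bᵀ e^{Aᵀ(T−s)} Cᵀ ds`. -/
noncomputable def gramianW {n m p : ℕ} (A : Matrix (Fin n) (Fin n) ℝ)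
    (B : Matrix (Fin n) (Fin m) ℝ) (C : Matrix (Fin p) (Fin n) ℝ) (t T : ℝ) :
    Matrix (Fin p) (Fin p) ℝ :=
  ∫ s in t..T, C * NormedSpace.exp ((T - s) • A) * B * Bᵀ *
      NormedSpace.exp ((T - s) • Aᵀ) * Cᵀ

/-- The optimal open-loop control
`u*(t) = −(L(a) ⊗ (Bᵀ e^{Aᵀ(T−t)} Cᵀ W(t₀,T)⁻¹ C e^{A(T−t₀)})) x₀`. -/
noncomputable def ustar {n m p N : ℕ} (A : Matrix (Fin n) (Fin n) ℝ)
    (B : Matrix (Fin n) (Fin m) ℝ) (C : Matrix (Fin p) (Fin n) ℝ)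
    (a : Fin N → ℝ) (x₀ : Fin N × Fin n → ℝ) (t₀ T t : ℝ) : Fin N × Fin m → ℝ :=
  -(Matrix.kroneckerMap (· * ·) (Lmat a)
      (Bᵀ * NormedSpace.exp ((T - t) • Aᵀ) * Cᵀ * (gramianW A B C t₀ T)⁻¹ *
        C * NormedSpace.exp ((T - t₀) • A))).mulVec x₀

/-- The variation-of-constants trajectory of agent `i` under the stacked control `u`:
`xᵢ(t) = e^{A(t−t₀)} xᵢ(t₀) + ∫_{t₀}^t e^{A(t−s)} B uᵢ(s) ds`. -/
noncomputable def traj {n m N : ℕ} (A : Matrix (Fin n) (Fin n) ℝ)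
    (B : Matrix (Fin n) (Fin m) ℝ) (u : ℝ → Fin N × Fin m → ℝ)
    (x₀ : Fin N × Fin n → ℝ) (t₀ : ℝ) (i : Fin N) (t : ℝ) : Fin n → ℝ :=
  (NormedSpace.exp ((t - t₀) • A)).mulVec (fun k => x₀ (i, k)) +
    ∫ s in t₀..t, (NormedSpace.exp ((t - s) • A) * B).mulVec (fun k => u s (i, k))

namespace Matrix

section Exp

variable {ι : Type*} [Fintype ι] [DecidableEq ι]

-- Any submultiplicative norm makes the exponential series converge; the statements below
-- only involve the topology, which all matrix norms share.
open scoped Norms.Operator in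
@[fun_prop]
theorem _root_.Continuous.matrix_exp_smul {X : Type*} [TopologicalSpace X] {f : X → ℝ}
    (hf : Continuous f) (A : Matrix ι ι ℝ) : Continuous fun x => NormedSpace.exp (f x • A) :=
  NormedSpace.exp_continuous.comp (hf.smul continuous_const)

open scoped Norms.Operator in
theorem exp_smul_mulVec_of_mulVec_eq_zero {A : Matrix ι ι ℝ} {v : ι → ℝ} (hv : A *ᵥ v = 0)
    (t : ℝ) : NormedSpace.exp (t • A) *ᵥ v = v := by
  have hexp := (NormedSpace.exp_series_hasSum_exp' (𝕂 := ℝ) (t • A)).mapL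
    (LinearMap.toContinuousLinearMap ((mulVecBilin ℝ ℝ).flip v))
  refine hexp.unique (hasSum_single 0 fun k hk => ?_) |>.trans ?_
  · obtain ⟨k, rfl⟩ := Nat.exists_eq_succ_of_ne_zero hk
    simp [pow_succ, hv]
  · simp

end Exp

section Integral

variable {ι κ l : Type*} [Fintype ι] [Fintype κ] [Fintype l] {a b : ℝ}

theorem intervalIntegral_mulVec {f : ℝ → Matrix κ ι ℝ} (hf : Continuous f) (v : ι → ℝ) :
    ∫ s in a..b, f s *ᵥ v = (∫ s in a..b, f s) *ᵥ v :=
  (LinearMap.toContinuousLinearMap ((mulVecBilin ℝ ℝ).flip v)).intervalIntegral_comp_comm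
    (hf.intervalIntegrable a b)

theorem intervalIntegral_mul_left {f : ℝ → Matrix κ l ℝ} (hf : Continuous f)
    (M : Matrix ι κ ℝ) : ∫ s in a..b, M * f s = M * ∫ s in a..b, f s :=
  (LinearMap.toContinuousLinearMap (mulLeftLinearMap l ℝ M)).intervalIntegral_comp_comm
    (hf.intervalIntegrable a b)

theorem intervalIntegral_mul_right {f : ℝ → Matrix l κ ℝ} (hf : Continuous f)
    (M : Matrix κ ι ℝ) : ∫ s in a..b, f s * M = (∫ s in a..b, f s) * M :=
  (LinearMap.toContinuousLinearMap (mulRightLinearMap l ℝ M)).intervalIntegral_comp_comm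
    (hf.intervalIntegrable a b)

end Integral

theorem kroneckerMap_mul_mulVec_apply {R ι ι' κ κ' : Type*} [CommSemiring R] [Fintype ι']
    [Fintype κ'] (L : Matrix ι ι' R) (K : Matrix κ κ' R) (x : ι' × κ' → R) (i : ι) (k : κ) :
    (kroneckerMap (· * ·) L K *ᵥ x) (i, k) = (K *ᵥ ∑ j, L i j • fun l => x (j, l)) k := by
  simp only [mulVec, dotProduct, kroneckerMap_apply, Fintype.sum_prod_type, Finset.sum_apply,
    Pi.smul_apply, smul_eq_mul, Finset.mul_sum]
  rw [Finset.sum_comm]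
  exact Finset.sum_congr rfl fun j _ => Finset.sum_congr rfl fun l _ => by ring

end Matrix

theorem sum_Lmat_smul {N : ℕ} {M : Type*} [AddCommGroup M] [Module ℝ M] (a : Fin N → ℝ)
    (y : Fin N → M) (i : Fin N) :
    ∑ j, Lmat a i j • y j = y i - (∑ k, a k)⁻¹ • ∑ j, a j • y j := by
  simp [Lmat, one_apply, vecMulVec_apply, sub_smul, ite_smul, Finset.sum_sub_distrib,
    mul_smul, Finset.smul_sum]

section Consensus

variable {n m p N : ℕ} (A : Matrix (Fin n) (Fin n) ℝ) (B : Matrix (Fin n) (Fin m) ℝ)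
  (C : Matrix (Fin p) (Fin n) ℝ) (t₀ T : ℝ)

noncomputable def controlGain (t : ℝ) : Matrix (Fin m) (Fin n) ℝ :=
  Bᵀ * NormedSpace.exp ((T - t) • Aᵀ) * Cᵀ * (gramianW A B C t₀ T)⁻¹ * C *
    NormedSpace.exp ((T - t₀) • A)

@[fun_prop]
theorem continuous_controlGain : Continuous (controlGain A B C t₀ T) := by
  unfold controlGain
  fun_prop

theorem ustar_slice (a : Fin N → ℝ) (x₀ : Fin N × Fin n → ℝ) (t : ℝ) (i : Fin N) :
    (fun k => ustar A B C a x₀ t₀ T t (i, k)) =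
      -(controlGain A B C t₀ T t *ᵥ ∑ j, Lmat a i j • fun k => x₀ (j, k)) := by
  ext k
  simp only [ustar, Pi.neg_apply, kroneckerMap_mul_mulVec_apply, controlGain]

variable {A B C t₀ T}

theorem mul_integral_exp_mul_controlGain (hW : IsUnit (gramianW A B C t₀ T)) :
    C * ∫ s in t₀..T, NormedSpace.exp ((T - s) • A) * B * controlGain A B C t₀ T s =
      C * NormedSpace.exp ((T - t₀) • A) := by
  have hWinv : gramianW A B C t₀ T * (gramianW A B C t₀ T)⁻¹ = 1 :=
    mul_nonsing_inv _ ((isUnit_iff_isUnit_det _).mp hW)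
  calc C * ∫ s in t₀..T, NormedSpace.exp ((T - s) • A) * B * controlGain A B C t₀ T s
      = ∫ s in t₀..T, (C * NormedSpace.exp ((T - s) • A) * B * Bᵀ *
          NormedSpace.exp ((T - s) • Aᵀ) * Cᵀ) *
          ((gramianW A B C t₀ T)⁻¹ * C * NormedSpace.exp ((T - t₀) • A)) := by
        rw [← intervalIntegral_mul_left (by fun_prop)]
        simp only [controlGain, Matrix.mul_assoc]
    _ = gramianW A B C t₀ T * ((gramianW A B C t₀ T)⁻¹ * C * NormedSpace.exp ((T - t₀) • A)) :=
        intervalIntegral_mul_right (by fun_prop) _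
    _ = C * NormedSpace.exp ((T - t₀) • A) := by
        rw [← Matrix.mul_assoc, ← Matrix.mul_assoc, hWinv, Matrix.one_mul]

theorem mulVec_traj_ustar (hW : IsUnit (gramianW A B C t₀ T)) (a : Fin N → ℝ)
    (x₀ : Fin N × Fin n → ℝ) (i : Fin N) :
    C *ᵥ traj A B (ustar A B C a x₀ t₀ T) x₀ t₀ i T =
      (∑ k, a k)⁻¹ • ∑ j, a j • (C * NormedSpace.exp ((T - t₀) • A)) *ᵥ fun k => x₀ (j, k) := by
  set w := ∑ j, Lmat a i j • fun k => x₀ (j, k)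
  have hint : ∫ s in t₀..T, (NormedSpace.exp ((T - s) • A) * B) *ᵥ
        (fun k => ustar A B C a x₀ t₀ T s (i, k)) =
      -((∫ s in t₀..T, NormedSpace.exp ((T - s) • A) * B * controlGain A B C t₀ T s) *ᵥ w) := by
    simp only [ustar_slice, mulVec_neg, mulVec_mulVec]
    rw [intervalIntegral.integral_neg, intervalIntegral_mulVec (by fun_prop)]
  calc C *ᵥ traj A B (ustar A B C a x₀ t₀ T) x₀ t₀ i T
      = (C * NormedSpace.exp ((T - t₀) • A)) *ᵥ (fun k => x₀ (i, k)) -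
          (C * ∫ s in t₀..T, NormedSpace.exp ((T - s) • A) * B * controlGain A B C t₀ T s) *ᵥ
            w := by
        rw [traj, hint, mulVec_add, mulVec_neg, mulVec_mulVec, mulVec_mulVec, ← sub_eq_add_neg]
    _ = _ := by
        rw [mul_integral_exp_mul_controlGain hW, mulVec_sum]
        simp only [mulVec_smul]
        rw [sum_Lmat_smul, sub_sub_cancel]

end Consensus

theorem consensus_point_is_weighted_average_general {n m p N : ℕ}
    (A : Matrix (Fin n) (Fin n) ℝ) (B : Matrix (Fin n) (Fin m) ℝ)
    (C : Matrix (Fin p) (Fin n) ℝ)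
    (a : Fin N → ℝ)
    (t₀ T : ℝ)
    (hW : IsUnit (gramianW A B C t₀ T))
    (x₀ : Fin N × Fin n → ℝ)
    (hker : ∀ i : Fin N, A.mulVec (fun k => x₀ (i, k)) = 0) :
    ∀ i : Fin N,
      C.mulVec (traj A B (ustar A B C a x₀ t₀ T) x₀ t₀ i T) =
        (∑ k, a k)⁻¹ • ∑ j, a j • C.mulVec (fun k => x₀ (j, k)) := by
  intro i
  simp only [mulVec_traj_ustar hW, ← mulVec_mulVec, exp_smul_mulVec_of_mulVec_eq_zero (hker _)]

/-- If every initial state lies in `ker A`, then under the optimal open-loop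
control the common output at time `T` is the `a`-weighted average of the initial outputs:
`C xᵢ(T) = (∑_k a_k)⁻¹ ∑_j a_j C x_j(t₀)` for every `i`. -/
theorem consensus_point_is_weighted_average {n m p N : ℕ}
    (A : Matrix (Fin n) (Fin n) ℝ) (B : Matrix (Fin n) (Fin m) ℝ)
    (C : Matrix (Fin p) (Fin n) ℝ) (hC : C.rank = p)
    (a : Fin N → ℝ) (ha : ∀ i, 0 < a i)
    (t₀ T : ℝ) (ht : t₀ < T)
    (hW : IsUnit (gramianW A B C t₀ T))
    (x₀ : Fin N × Fin n → ℝ)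
    (hker : ∀ i : Fin N, A.mulVec (fun k => x₀ (i, k)) = 0) :
    ∀ i : Fin N,
      C.mulVec (traj A B (ustar A B C a x₀ t₀ T) x₀ t₀ i T) =
        (∑ k, a k)⁻¹ • ∑ j, a j • C.mulVec (fun k => x₀ (j, k)) :=
  consensus_point_is_weighted_average_general A B C a t₀ T hW x₀ hker
end

section
/- Let P_0 ∈ ℝ^{n×n} be symmetric positive semidefinite with A^T P_0 + P_0 A = P_0 B B^T P_0. Let u : [0,∞) → ℝ^m be continuous and let x solve ẋ = A x + B u with x(0) = x_0. Then for every τ > 0, ∫_0^τ ‖u(t)‖² dt = x_0^T P_0 x_0 − x(τ)^T P_0 x(τ) + ∫_0^τ ‖u(t) + B^T P_0 x(t)‖² dt. Consequently, if in addition x(t) → 0 as t → ∞, then ∫_0^∞ ‖u(t)‖² dt ≥ x_0^T P_0 x_0. -/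
/-!
Along a trajectory, the storage function `V t = x tᵀ P₀ x t` satisfies
`V' = ẋᵀ P₀ x + xᵀ P₀ ẋ = xᵀ (Aᵀ P₀ + P₀ A) x + 2 uᵀ Bᵀ P₀ x = ‖u + Bᵀ P₀ x‖² - ‖u‖²`
by the Riccati equation, so integrating over `[0, τ]` gives the identity. Dropping the
nonnegative completed square, `∫_0^τ ‖u‖² ≥ V 0 - V τ`, and `V τ → 0` when `x τ → 0`.
-/

open Matrix MeasureTheory Filter

section Deriv

variable {𝕜 : Type*} [NontriviallyNormedField 𝕜] {ι : Type*} [Fintype ι]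
  {f g : 𝕜 → ι → 𝕜} {f' g' : ι → 𝕜} {s : Set 𝕜} {t : 𝕜}

theorem HasDerivWithinAt.dotProduct (hf : HasDerivWithinAt f f' s t)
    (hg : HasDerivWithinAt g g' s t) :
    HasDerivWithinAt (fun t ↦ f t ⬝ᵥ g t) (f' ⬝ᵥ g t + f t ⬝ᵥ g') s t := by
  have := HasDerivWithinAt.fun_sum (u := Finset.univ) fun i _ ↦
    (hasDerivWithinAt_pi.mp hf i).fun_mul (hasDerivWithinAt_pi.mp hg i)
  simpa only [_root_.dotProduct, Finset.sum_add_distrib] using this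

theorem HasDerivWithinAt.matrix_mulVec {κ : Type*} (M : Matrix κ ι 𝕜)
    (hf : HasDerivWithinAt f f' s t) :
    HasDerivWithinAt (fun t ↦ M *ᵥ f t) (M *ᵥ f') s t :=
  hasDerivWithinAt_pi.mpr fun i ↦ by
    simpa [mulVec] using (hasDerivWithinAt_const t s (M i)).dotProduct hf

end Deriv

theorem Matrix.riccati_completion_of_squares {R : Type*} [CommRing R] {ι κ : Type*}
    [Fintype ι] [Fintype κ] {A P : Matrix ι ι R} {B : Matrix ι κ R} (hP : P.IsSymm)
    (hare : Aᵀ * P + P * A = P * B * Bᵀ * P) (v : ι → R) (w : κ → R) :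
    (A *ᵥ v + B *ᵥ w) ⬝ᵥ P *ᵥ v + v ⬝ᵥ P *ᵥ (A *ᵥ v + B *ᵥ w) =
      ∑ k, (w k + ((Bᵀ * P) *ᵥ v) k) ^ 2 - ∑ k, w k ^ 2 := by
  set z := (Bᵀ * P) *ᵥ v
  have hsq : v ⬝ᵥ (P * B * Bᵀ * P) *ᵥ v = z ⬝ᵥ z := by
    rw [show P * B * Bᵀ * P = (Bᵀ * P)ᵀ * (Bᵀ * P) by
      rw [transpose_mul, transpose_transpose, hP.eq, Matrix.mul_assoc (P * B)],
      ← mulVec_mulVec, dotProduct_mulVec, vecMul_transpose]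
  have hdrift : (A *ᵥ v) ⬝ᵥ P *ᵥ v + v ⬝ᵥ P *ᵥ (A *ᵥ v) = z ⬝ᵥ z := by
    rw [← hsq, ← hare, add_mulVec, dotProduct_add, ← mulVec_mulVec, ← mulVec_mulVec,
      dotProduct_mulVec v Aᵀ, vecMul_transpose]
  have hcross : (B *ᵥ w) ⬝ᵥ P *ᵥ v = w ⬝ᵥ z := by
    rw [dotProduct_comm, dotProduct_mulVec, ← mulVec_transpose, mulVec_mulVec, dotProduct_comm]
  have hcross_symm : v ⬝ᵥ P *ᵥ (B *ᵥ w) = w ⬝ᵥ z := by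
    rw [← hcross, dotProduct_mulVec, ← mulVec_transpose, hP.eq, dotProduct_comm]
  calc (A *ᵥ v + B *ᵥ w) ⬝ᵥ P *ᵥ v + v ⬝ᵥ P *ᵥ (A *ᵥ v + B *ᵥ w)
      = z ⬝ᵥ z + 2 * (w ⬝ᵥ z) := by
        rw [add_dotProduct, mulVec_add, dotProduct_add, hcross, hcross_symm, ← hdrift]; ring
    _ = ∑ k, (w k + z k) ^ 2 - ∑ k, w k ^ 2 := by
        simp only [dotProduct, Finset.mul_sum, ← Finset.sum_sub_distrib, ← Finset.sum_add_distrib]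
        exact Finset.sum_congr rfl fun k _ ↦ by ring

theorem integral_sum_sq_eq_of_riccati {ι κ : Type*} [Fintype ι] [Fintype κ]
    {A P : Matrix ι ι ℝ} {B : Matrix ι κ ℝ} (hP : P.IsSymm)
    (hare : Aᵀ * P + P * A = P * B * Bᵀ * P) {u : ℝ → κ → ℝ} (hu : ContinuousOn u (Set.Ici 0))
    {x : ℝ → ι → ℝ}
    (hode : ∀ t ∈ Set.Ici (0 : ℝ), HasDerivWithinAt x (A *ᵥ x t + B *ᵥ u t) (Set.Ici 0) t)
    {τ : ℝ} (hτ : 0 ≤ τ) :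
    ∫ t in (0 : ℝ)..τ, ∑ k, u t k ^ 2 =
      x 0 ⬝ᵥ P *ᵥ x 0 - x τ ⬝ᵥ P *ᵥ x τ +
        ∫ t in (0 : ℝ)..τ, ∑ k, (u t k + ((Bᵀ * P) *ᵥ x t) k) ^ 2 := by
  have hV : ∀ t ∈ Set.Ici (0 : ℝ), HasDerivWithinAt (fun t ↦ x t ⬝ᵥ P *ᵥ x t)
      (∑ k, (u t k + ((Bᵀ * P) *ᵥ x t) k) ^ 2 - ∑ k, u t k ^ 2) (Set.Ici 0) t := fun t ht ↦ by
    rw [← riccati_completion_of_squares hP hare]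
    exact (hode t ht).dotProduct ((hode t ht).matrix_mulVec P)
  have hsub : Set.uIcc 0 τ ⊆ Set.Ici (0 : ℝ) := by
    rw [Set.uIcc_of_le hτ]; exact Set.Icc_subset_Ici_self
  have hx : ContinuousOn x (Set.uIcc 0 τ) := fun t ht ↦
    (hode t (hsub ht)).continuousWithinAt.mono hsub
  have hu' : ContinuousOn u (Set.uIcc 0 τ) := hu.mono hsub
  have hint_u : IntervalIntegrable (fun t ↦ ∑ k, u t k ^ 2) volume 0 τ :=
    ContinuousOn.intervalIntegrable (by fun_prop)
  have hint_sq : IntervalIntegrable (fun t ↦ ∑ k, (u t k + ((Bᵀ * P) *ᵥ x t) k) ^ 2) volume 0 τ :=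
    ContinuousOn.intervalIntegrable (by fun_prop)
  have hftc := intervalIntegral.integral_eq_sub_of_hasDeriv_right_of_le hτ
    (fun t ht ↦ (hV t ht.1).continuousWithinAt.mono Set.Icc_subset_Ici_self)
    (fun t ht ↦ (hV t ht.1.le).mono (Set.Ioi_subset_Ici ht.1.le)) (hint_sq.sub hint_u)
  rw [intervalIntegral.integral_sub hint_sq hint_u] at hftc
  linarith

theorem ofReal_le_lintegral_Ioi_of_tendsto {g F : ℝ → ℝ} {a c : ℝ} (hg : ∀ t, 0 ≤ g t)
    (hF : Tendsto F atTop (nhds c)) (hFg : ∀ᶠ τ in atTop, F τ ≤ ∫ t in a..τ, g t) :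
    ENNReal.ofReal c ≤ ∫⁻ t in Set.Ioi a, ENNReal.ofReal (g t) := by
  refine le_of_tendsto ((ENNReal.continuous_ofReal.tendsto c).comp hF) ?_
  filter_upwards [hFg, eventually_ge_atTop a] with τ hFτ haτ
  calc ENNReal.ofReal (F τ)
      ≤ ENNReal.ofReal (∫ t in Set.Ioc a τ, g t) := by
        rw [← intervalIntegral.integral_of_le haτ]; exact ENNReal.ofReal_le_ofReal hFτ
    _ ≤ ∫⁻ t in Set.Ioc a τ, ‖g t‖ₑ :=
        (Real.ofReal_le_enorm _).trans (enorm_integral_le_lintegral_enorm _)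
    _ = ∫⁻ t in Set.Ioc a τ, ENNReal.ofReal (g t) := by simp only [Real.enorm_of_nonneg (hg _)]
    _ ≤ ∫⁻ t in Set.Ioi a, ENNReal.ofReal (g t) := lintegral_mono_set Set.Ioc_subset_Ioi_self

/-- If `P₀` is symmetric positive semidefinite with
`Aᵀ P₀ + P₀ A = P₀ B Bᵀ P₀`, `u` is continuous on `[0,∞)` and `x` solves `ẋ = A x + B u` with
`x(0) = x₀`, then for every `τ > 0`,
`∫_0^τ ‖u‖² dt = x₀ᵀ P₀ x₀ − x(τ)ᵀ P₀ x(τ) + ∫_0^τ ‖u + Bᵀ P₀ x‖² dt`;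
consequently if moreover `x(t) → 0` as `t → ∞`, then `∫_0^∞ ‖u‖² dt ≥ x₀ᵀ P₀ x₀` (stated with
the lower Lebesgue integral so that an infinite energy integral is handled correctly). -/
theorem energy_completion_of_squares {n m : ℕ}
    (A : Matrix (Fin n) (Fin n) ℝ) (B : Matrix (Fin n) (Fin m) ℝ)
    (P₀ : Matrix (Fin n) (Fin n) ℝ) (hP : P₀.PosSemidef)
    (hare : Aᵀ * P₀ + P₀ * A = P₀ * B * Bᵀ * P₀)
    (u : ℝ → Fin m → ℝ) (hu : ContinuousOn u (Set.Ici 0))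
    (x : ℝ → Fin n → ℝ) (x₀ : Fin n → ℝ) (hx0 : x 0 = x₀)
    (hode : ∀ t ∈ Set.Ici (0:ℝ),
      HasDerivWithinAt x (A.mulVec (x t) + B.mulVec (u t)) (Set.Ici 0) t) :
    (∀ τ : ℝ, 0 < τ →
      ∫ t in (0:ℝ)..τ, ∑ k, (u t k) ^ 2 =
        dotProduct x₀ (P₀.mulVec x₀) -
          dotProduct (x τ) (P₀.mulVec (x τ)) +
          ∫ t in (0:ℝ)..τ, ∑ k, (u t k + (Bᵀ * P₀).mulVec (x t) k) ^ 2) ∧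
    (Tendsto x atTop (nhds 0) →
      ENNReal.ofReal (dotProduct x₀ (P₀.mulVec x₀)) ≤
        ∫⁻ t in Set.Ioi (0:ℝ), ENNReal.ofReal (∑ k, (u t k) ^ 2)) := by
  have energy : ∀ τ : ℝ, 0 < τ →
      ∫ t in (0:ℝ)..τ, ∑ k, u t k ^ 2 = x₀ ⬝ᵥ P₀ *ᵥ x₀ - x τ ⬝ᵥ P₀ *ᵥ x τ +
        ∫ t in (0:ℝ)..τ, ∑ k, (u t k + ((Bᵀ * P₀) *ᵥ x t) k) ^ 2 := fun τ hτ ↦ hx0 ▸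
    integral_sum_sq_eq_of_riccati (isHermitian_iff_isSymm.mp hP.isHermitian) hare hu hode hτ.le
  refine ⟨energy, fun hx ↦ ?_⟩
  have hq : Continuous fun v : Fin n → ℝ ↦ v ⬝ᵥ P₀ *ᵥ v := by fun_prop
  have hV : Tendsto (fun t ↦ x t ⬝ᵥ P₀ *ᵥ x t) atTop (nhds 0) :=
    (hq.tendsto' 0 0 (by simp)).comp hx
  refine ofReal_le_lintegral_Ioi_of_tendsto (fun t ↦ Finset.sum_nonneg fun k _ ↦ sq_nonneg _)
    (by simpa using (tendsto_const_nhds (x := x₀ ⬝ᵥ P₀ *ᵥ x₀)).sub hV) ?_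
  filter_upwards [eventually_gt_atTop 0] with τ hτ
  rw [energy τ hτ]
  exact le_add_of_nonneg_right <| intervalIntegral.integral_nonneg hτ.le
    fun t _ ↦ Finset.sum_nonneg fun k _ ↦ sq_nonneg _
end
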